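/- arXiv:math/0609440 — 2 statements merged into one kernel-verified Lean document; each statement's English description precedes it below -/
import Mathlib

section
/- The assignment s: A ↦ b₁, b₁ ↦ b_i, b_i ↦ A, b₋₁ ↦ b₋ᵢ, b₋ᵢ ↦ C, C ↦ b₋₁, where C := -A - b₁ - b_i - b₋₁ - b₋ᵢ, extends to a well-defined Lie algebra automorphism of the free Lie algebra on generators A, b₁, b_i, b₋₁, b₋ᵢ, and this automorphism has order 3. -/
/-- Generators of the free Lie algebra 𝔣₅: A, b[1], b[i], b[-1], b[-i]. -/
inductive Gen5 : Type
  | A | b1 | bi | bm1 | bmi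
  deriving DecidableEq

open FreeLieAlgebra Gen5

/-- The element C = -A - b[1] - b[i] - b[-1] - b[-i] of 𝔣₅. -/
noncomputable def C5 : FreeLieAlgebra ℂ Gen5 :=
  -of ℂ A - of ℂ b1 - of ℂ bi - of ℂ bm1 - of ℂ bmi

/-- The Lie algebra endomorphism s of 𝔣₅ determined by
`A ↦ b[1], b[1] ↦ b[i], b[i] ↦ A, b[-1] ↦ b[-i], b[-i] ↦ C`. -/
noncomputable def sHom : FreeLieAlgebra ℂ Gen5 →ₗ⁅ℂ⁆ FreeLieAlgebra ℂ Gen5 :=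
  FreeLieAlgebra.lift ℂ fun g => match g with
    | A => of ℂ b1
    | b1 => of ℂ bi
    | bi => of ℂ A
    | bm1 => of ℂ bmi
    | bmi => C5

lemma sHom_of (g : Gen5) : sHom (of ℂ g) = (match g with
    | A => of ℂ b1
    | b1 => of ℂ bi
    | bi => of ℂ A
    | bm1 => of ℂ bmi
    | bmi => C5) := by
  simp [sHom]

lemma sHom_C5 : sHom C5 = of ℂ bm1 := by
  rw [C5, map_sub, map_sub, map_sub, map_sub, map_neg]
  simp only [sHom_of, C5]
  abel

lemma sHom_cube : ∀ x, sHom (sHom (sHom x)) = x := by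
  have : (sHom.comp sHom).comp sHom = LieHom.id := by
    apply FreeLieAlgebra.hom_ext
    intro g
    cases g <;> simp [LieHom.comp_apply, sHom_of, sHom_C5]
  intro x
  exact DFunLike.congr_fun this x

theorem stmt4 :
    Function.Bijective sHom ∧
    (∀ x : FreeLieAlgebra ℂ Gen5, sHom (sHom (sHom x)) = x) ∧
    sHom C5 = of ℂ bm1 ∧
    ¬ (∀ x : FreeLieAlgebra ℂ Gen5, sHom x = x) := by
  refine ⟨⟨fun x y h => ?_, fun x => ⟨sHom (sHom x), sHom_cube x⟩⟩, sHom_cube, sHom_C5, ?_⟩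
  · have := congrArg (fun z => sHom (sHom z)) h
    simpa [sHom_cube] using this
  · intro h
    have h1 := h (of ℂ A)
    rw [sHom_of] at h1
    -- map to ℂ (abelian Lie algebra): A ↦ 0, b1 ↦ 1
    letI : LieRing ℂ := LieRing.ofAssociativeRing
    have := congrArg (FreeLieAlgebra.lift ℂ (fun g => match g with
      | A => (0 : ℂ) | _ => 1)) h1
    simp at this
end

section
/- Let G be a group with automorphisms s of order 3 and t of order 4 satisfying (st)² = id, and let Ψ ∈ G. If s²(Ψ)·s(Ψ)·Ψ = 1 and st(Ψ) = Ψ⁻¹, then Ψ⁻¹ · (st²s⁻¹)(Ψ) · (s⁻¹ts⁻¹)(Ψ⁻¹) · t(Ψ) = 1. -/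
/-- In a group `G` with automorphisms `s, t` satisfying `s³ = t⁴ = (st)² = 1`,
the hexagon relation `s²(Ψ)·s(Ψ)·Ψ = 1` together with the duality relation
`st(Ψ) = Ψ⁻¹` implies the octogon relation
`Ψ⁻¹ · (st²s⁻¹)(Ψ) · (s⁻¹ts⁻¹)(Ψ⁻¹) · t(Ψ) = 1`. -/
theorem stmt16 (G : Type*) [Group G] (s t : MulAut G)
    (hs : s ^ 3 = 1) (ht : t ^ 4 = 1) (hst : (s * t) ^ 2 = 1)
    (Ψ : G)
    (hexagon : (s ^ 2) Ψ * s Ψ * Ψ = 1)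
    (duality : (s * t) Ψ = Ψ⁻¹) :
    Ψ⁻¹ * (s * t ^ 2 * s⁻¹) Ψ * (s⁻¹ * t * s⁻¹) Ψ⁻¹ * t Ψ = 1 := by
  -- basic consequences of the relations
  have h1 : s * t * s = t⁻¹ := by
    have h := hst
    rw [pow_two] at h
    have h' : s * t = (s * t)⁻¹ := eq_inv_of_mul_eq_one_left h
    rw [mul_inv_rev] at h'
    rw [h', inv_mul_cancel_right]
  have hsinv : s⁻¹ = s ^ 2 := by
    apply inv_eq_of_mul_eq_one_right
    calc s * s ^ 2 = s ^ 3 := by simp [pow_succ, pow_zero, mul_assoc]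
    _ = 1 := hs
  have h2 : t ^ 2 = s * t * s ^ 2 * t * s := by
    have ht2 : t ^ 2 * t ^ 2 = 1 := by
      calc t ^ 2 * t ^ 2 = t ^ 4 := by simp [pow_succ, pow_zero, mul_assoc]
      _ = 1 := ht
    calc t ^ 2 = (t ^ 2)⁻¹ := eq_inv_of_mul_eq_one_left ht2
    _ = t⁻¹ * t⁻¹ := by rw [pow_two, mul_inv_rev]
    _ = (s * t * s) * (s * t * s) := by rw [h1]
    _ = s * t * s ^ 2 * t * s := by simp [pow_two, mul_assoc]
  have key2 : s * t ^ 2 * s⁻¹ = s * s * (t * (s * (s * t))) := by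
    rw [h2]; simp [pow_two, mul_assoc]
  have key3 : s⁻¹ * t * s⁻¹ = s * s * (t * (s * s)) := by
    rw [hsinv]; simp [pow_two, mul_assoc]
  have key4 : t = s * s * (s * t) := by
    calc t = s ^ 3 * t := by rw [hs, one_mul]
    _ = s * s * (s * t) := by simp [pow_succ, pow_zero, mul_assoc]
  -- expanded forms of the hypotheses
  have dual' : s (t Ψ) = Ψ⁻¹ := duality
  have hex' : s (s Ψ) * s Ψ * Ψ = 1 := by
    have : (s ^ 2) Ψ = s (s Ψ) := by rw [pow_two]; rfl
    rw [← this]; exact hexagon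
  -- apply s*t to the hexagon relation, then use duality
  have f1 : s (t (s (s Ψ))) * s (t (s Ψ)) = Ψ := by
    have h := congrArg (fun x => s (t x)) hex'
    simp only [map_mul, map_one] at h
    rw [dual'] at h
    rwa [mul_inv_eq_one] at h
  -- compute each factor of the octogon relation
  have e2 : (s * t ^ 2 * s⁻¹) Ψ = (s (s (t (s Ψ))))⁻¹ := by
    rw [key2]
    show s (s (t (s ((s * t) Ψ)))) = _
    rw [duality]
    simp only [map_inv]
  have e3 : (s⁻¹ * t * s⁻¹) Ψ⁻¹ = (s (s (t (s (s Ψ)))))⁻¹ := by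
    rw [key3]
    show s (s (t (s (s Ψ⁻¹)))) = _
    simp only [map_inv]
  have e4 : t Ψ = (s (s Ψ))⁻¹ := by
    conv_lhs => rw [key4]
    show s (s ((s * t) Ψ)) = _
    rw [duality]
    simp only [map_inv]
  rw [e2, e3, e4]
  have f2 : s (s (t (s (s Ψ)))) * s (s (t (s Ψ))) = s Ψ := by
    have h := congrArg s f1
    rwa [map_mul] at h
  calc Ψ⁻¹ * (s (s (t (s Ψ))))⁻¹ * (s (s (t (s (s Ψ)))))⁻¹ * (s (s Ψ))⁻¹
      = (s (s Ψ) * (s (s (t (s (s Ψ)))) * s (s (t (s Ψ)))) * Ψ)⁻¹ := by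
        group
    _ = (s (s Ψ) * s Ψ * Ψ)⁻¹ := by rw [f2]
    _ = 1 := by rw [hex', inv_one]
end
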